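/- Let Ω ⊂ ℝ³ be an open set, u ∈ C³(Ω) with Δ♭u = 0 on Ω, where Δ♭ = X² + Y² with X = ∂_x - (y/2)∂_t and Y = ∂_y + (x/2)∂_t. Then the pointwise identity (1/2)·X(|∇u|²) = div♭(Xu·∇u) + (Yu)(Tu) holds on Ω, where ∇u = (Xu, Yu), |∇u|² = (Xu)² + (Yu)², T = ∂_t, and div♭(a,b) := Xa + Yb. -/

import Mathlib

/-!
Viewing `X` and `Y` as derivatives along the vector fields `(1, 0, -y/2)` and `(0, 1, x/2)`, whose
Lie bracket is `∂ₜ`, symmetry of the second derivative of `u ∈ C²` gives `X(Yu) - Y(Xu) = Tu`.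
The Leibniz rule then yields
`(1/2) X|∇u|² - X(Xu·Xu) - Y(Xu·Yu) = Yu·(XYu - YXu) - Xu·(XXu + YYu) = Yu·Tu - Xu·Δ♭u`,
whose last term vanishes for `Δ♭`-harmonic `u`.
-/

noncomputable section

def pdx (f : ℝ × ℝ × ℝ → ℝ) (p : ℝ × ℝ × ℝ) : ℝ :=
  deriv (fun s => f (s, p.2.1, p.2.2)) p.1

def pdy (f : ℝ × ℝ × ℝ → ℝ) (p : ℝ × ℝ × ℝ) : ℝ :=
  deriv (fun s => f (p.1, s, p.2.2)) p.2.1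

def pdt (f : ℝ × ℝ × ℝ → ℝ) (p : ℝ × ℝ × ℝ) : ℝ :=
  deriv (fun s => f (p.1, p.2.1, s)) p.2.2

def Xop (f : ℝ × ℝ × ℝ → ℝ) (p : ℝ × ℝ × ℝ) : ℝ :=
  pdx f p - p.2.1 / 2 * pdt f p

def Yop (f : ℝ × ℝ × ℝ → ℝ) (p : ℝ × ℝ × ℝ) : ℝ :=
  pdy f p + p.1 / 2 * pdt f p

open Topology

def Xfield (q : ℝ × ℝ × ℝ) : ℝ × ℝ × ℝ := (1, 0, -(q.2.1 / 2))

def Yfield (q : ℝ × ℝ × ℝ) : ℝ × ℝ × ℝ := (0, 1, q.1 / 2)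

theorem fderiv_Xfield_apply (p w : ℝ × ℝ × ℝ) : fderiv ℝ Xfield p w = (0, 0, -(w.2.1 / 2)) := by
  have h : HasFDerivAt Xfield _ p :=
    (hasFDerivAt_const (1 : ℝ) p).prodMk ((hasFDerivAt_const (0 : ℝ) p).prodMk
      (((hasFDerivAt_snd (𝕜 := ℝ) (p := p)).fst.mul_const (2⁻¹ : ℝ)).neg))
  simp [h.fderiv, div_eq_inv_mul]

theorem fderiv_Yfield_apply (p w : ℝ × ℝ × ℝ) : fderiv ℝ Yfield p w = (0, 0, w.1 / 2) := by
  have h : HasFDerivAt Yfield _ p :=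
    (hasFDerivAt_const (0 : ℝ) p).prodMk ((hasFDerivAt_const (1 : ℝ) p).prodMk
      ((hasFDerivAt_fst (𝕜 := ℝ) (p := p)).mul_const (2⁻¹ : ℝ)))
  simp [h.fderiv, div_eq_inv_mul]

theorem differentiable_Xfield : Differentiable ℝ Xfield := by
  unfold Xfield; fun_prop

theorem differentiable_Yfield : Differentiable ℝ Yfield := by
  unfold Yfield; fun_prop

theorem lieBracket_Xfield_Yfield (p : ℝ × ℝ × ℝ) :
    VectorField.lieBracket ℝ Xfield Yfield p = (0, 0, 1) := by
  simp only [VectorField.lieBracket, fderiv_Xfield_apply, fderiv_Yfield_apply, Xfield, Yfield]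
  ext <;> simp
  ring

theorem differentiableAt_fderiv_apply {𝕜 E F : Type*} [NontriviallyNormedField 𝕜]
    [NormedAddCommGroup E] [NormedSpace 𝕜 E] [NormedAddCommGroup F] [NormedSpace 𝕜 F]
    {f : E → F} {V : E → E} {x : E} (hf : ContDiffAt 𝕜 2 f x) (hV : DifferentiableAt 𝕜 V x) :
    DifferentiableAt 𝕜 (fun y => fderiv 𝕜 f y (V y)) x :=
  ((hf.fderiv_right one_add_one_eq_two.le).differentiableAt one_ne_zero).clm_apply hV

variable {f g : ℝ × ℝ × ℝ → ℝ} {p : ℝ × ℝ × ℝ}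

theorem pdx_eq_fderiv (hf : DifferentiableAt ℝ f p) : pdx f p = fderiv ℝ f p (1, 0, 0) :=
  (hf.hasFDerivAt.comp_hasDerivAt_of_eq p.1
    ((hasDerivAt_id _).prodMk ((hasDerivAt_const _ _).prodMk (hasDerivAt_const _ _))) rfl).deriv

theorem pdy_eq_fderiv (hf : DifferentiableAt ℝ f p) : pdy f p = fderiv ℝ f p (0, 1, 0) :=
  (hf.hasFDerivAt.comp_hasDerivAt_of_eq p.2.1
    ((hasDerivAt_const _ _).prodMk ((hasDerivAt_id _).prodMk (hasDerivAt_const _ _))) rfl).deriv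

theorem pdt_eq_fderiv (hf : DifferentiableAt ℝ f p) : pdt f p = fderiv ℝ f p (0, 0, 1) :=
  (hf.hasFDerivAt.comp_hasDerivAt_of_eq p.2.2
    ((hasDerivAt_const _ _).prodMk ((hasDerivAt_const _ _).prodMk (hasDerivAt_id _))) rfl).deriv

theorem Xop_eq_fderiv (hf : DifferentiableAt ℝ f p) : Xop f p = fderiv ℝ f p (Xfield p) := by
  have hX : Xfield p = (1, 0, 0) - (p.2.1 / 2) • (0, 0, 1) := by ext <;> simp [Xfield]
  rw [Xop, pdx_eq_fderiv hf, pdt_eq_fderiv hf, hX, map_sub, map_smul, smul_eq_mul]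

theorem Yop_eq_fderiv (hf : DifferentiableAt ℝ f p) : Yop f p = fderiv ℝ f p (Yfield p) := by
  have hY : Yfield p = (0, 1, 0) + (p.1 / 2) • (0, 0, 1) := by ext <;> simp [Yfield]
  rw [Yop, pdy_eq_fderiv hf, pdt_eq_fderiv hf, hY, map_add, map_smul, smul_eq_mul]

theorem Xop_add (hf : DifferentiableAt ℝ f p) (hg : DifferentiableAt ℝ g p) :
    Xop (fun q => f q + g q) p = Xop f p + Xop g p := by
  rw [Xop_eq_fderiv (f := fun q => f q + g q) (hf.add hg), Xop_eq_fderiv hf,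
    Xop_eq_fderiv hg, fderiv_fun_add hf hg]
  rfl

theorem Xop_mul (hf : DifferentiableAt ℝ f p) (hg : DifferentiableAt ℝ g p) :
    Xop (fun q => f q * g q) p = Xop f p * g p + f p * Xop g p := by
  rw [Xop_eq_fderiv (f := fun q => f q * g q) (hf.mul hg), Xop_eq_fderiv hf,
    Xop_eq_fderiv hg, fderiv_fun_mul hf hg]
  simp only [add_apply, smul_apply, smul_eq_mul]
  ring

theorem Yop_mul (hf : DifferentiableAt ℝ f p) (hg : DifferentiableAt ℝ g p) :
    Yop (fun q => f q * g q) p = Yop f p * g p + f p * Yop g p := by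
  rw [Yop_eq_fderiv (f := fun q => f q * g q) (hf.mul hg), Yop_eq_fderiv hf,
    Yop_eq_fderiv hg, fderiv_fun_mul hf hg]
  simp only [add_apply, smul_apply, smul_eq_mul]
  ring

theorem Xop_eventuallyEq (hf : ContDiffAt ℝ 1 f p) :
    Xop f =ᶠ[𝓝 p] fun q => fderiv ℝ f q (Xfield q) :=
  (hf.eventually (by simp)).mono fun _ hq => Xop_eq_fderiv (hq.differentiableAt one_ne_zero)

theorem Yop_eventuallyEq (hf : ContDiffAt ℝ 1 f p) :
    Yop f =ᶠ[𝓝 p] fun q => fderiv ℝ f q (Yfield q) :=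
  (hf.eventually (by simp)).mono fun _ hq => Yop_eq_fderiv (hq.differentiableAt one_ne_zero)

theorem differentiableAt_Xop (hf : ContDiffAt ℝ 2 f p) : DifferentiableAt ℝ (Xop f) p :=
  (Xop_eventuallyEq (hf.of_le one_le_two)).differentiableAt_iff.mpr
    (differentiableAt_fderiv_apply hf (differentiable_Xfield p))

theorem differentiableAt_Yop (hf : ContDiffAt ℝ 2 f p) : DifferentiableAt ℝ (Yop f) p :=
  (Yop_eventuallyEq (hf.of_le one_le_two)).differentiableAt_iff.mpr
    (differentiableAt_fderiv_apply hf (differentiable_Yfield p))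

theorem Xop_Yop_sub_Yop_Xop (hf : ContDiffAt ℝ 2 f p) :
    Xop (Yop f) p - Yop (Xop f) p = pdt f p := by
  rw [Xop_eq_fderiv (differentiableAt_Yop hf), Yop_eq_fderiv (differentiableAt_Xop hf),
    (Yop_eventuallyEq (hf.of_le one_le_two)).fderiv_eq,
    (Xop_eventuallyEq (hf.of_le one_le_two)).fderiv_eq,
    ← VectorField.fderiv_apply_lieBracket hf (by simp [minSmoothness_of_isRCLikeNormedField])
      (differentiable_Yfield p) (differentiable_Xfield p),
    lieBracket_Xfield_Yfield, pdt_eq_fderiv (hf.differentiableAt two_ne_zero)]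

theorem rellich_identity (hf : ContDiffAt ℝ 2 f p) :
    1 / 2 * Xop (fun q => Xop f q ^ 2 + Yop f q ^ 2) p =
      Xop (fun q => Xop f q * Xop f q) p + Yop (fun q => Xop f q * Yop f q) p
        + Yop f p * pdt f p - Xop f p * (Xop (Xop f) p + Yop (Yop f) p) := by
  have hX := differentiableAt_Xop hf
  have hY := differentiableAt_Yop hf
  simp only [sq]
  rw [Xop_add (f := fun q => Xop f q * Xop f q) (g := fun q => Yop f q * Yop f q)
      (hX.mul hX) (hY.mul hY), Xop_mul hX hX, Xop_mul hY hY, Yop_mul hX hY]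
  linear_combination Yop f p * Xop_Yop_sub_Yop_Xop hf

/-- Pointwise Rellich-type identity for `Δ♭`-harmonic functions:
`(1/2)·X(|∇u|²) = div♭(Xu·∇u) + (Yu)(Tu)` on `Ω`, where
`div♭(Xu·∇u) = X(Xu·Xu) + Y(Xu·Yu)`. -/
theorem rellich_pointwise (Ω : Set (ℝ × ℝ × ℝ)) (hΩ : IsOpen Ω)
    (u : ℝ × ℝ × ℝ → ℝ) (hu : ContDiffOn ℝ 3 u Ω)
    (hharm : ∀ p ∈ Ω, Xop (fun q => Xop u q) p + Yop (fun q => Yop u q) p = 0) :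
    ∀ p ∈ Ω,
      (1 / 2) * Xop (fun q => (Xop u q) ^ 2 + (Yop u q) ^ 2) p =
        (Xop (fun q => Xop u q * Xop u q) p + Yop (fun q => Xop u q * Yop u q) p)
          + Yop u p * pdt u p := by
  intro p hp
  have hu₂ : ContDiffAt ℝ 2 u p := (hu.contDiffAt (hΩ.mem_nhds hp)).of_le (by norm_num)
  linear_combination rellich_identity hu₂ - Xop u p * hharm p hp
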